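/- Let Z ∈ ℝ^{p×n}, λ₁ > 0, λ₂ ≥ 0, and h : ℝ^{p×n} → ℝ. Suppose (L*, R*, E*) with L* ∈ ℝ^{p×d}, R* ∈ ℝ^{n×d}, E* ∈ ℝ^{p×n} minimizes (1/2)‖Z − LRᵀ − E‖_F² + (λ₁/2)‖L‖_{2,∞}² + λ₂ h(E) over all (L, R, E) subject to the constraint ‖R‖_{2,∞} ≤ 1, and suppose ‖L*‖_{2,∞} > 0. Then ‖R*‖_{2,∞} = 1, i.e., the optimum is attained at the boundary of the feasible set. -/
import Mathlib


open scoped BigOperators Matrix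

/-- Frobenius norm of a real matrix. -/
noncomputable def frobNorm {p n : ℕ} (M : Matrix (Fin p) (Fin n) ℝ) : ℝ :=
  Real.sqrt (∑ i, ∑ j, (M i j) ^ 2)

/-- The ℓ_{2,∞} norm: the maximum ℓ₂ norm of the rows. -/
noncomputable def twoInfNorm {p n : ℕ} (M : Matrix (Fin p) (Fin n) ℝ) : ℝ :=
  ⨆ i, Real.sqrt (∑ j, (M i j) ^ 2)

lemma twoInf_nonneg {p n : ℕ} (M : Matrix (Fin p) (Fin n) ℝ) : 0 ≤ twoInfNorm M :=
  Real.iSup_nonneg fun _ => Real.sqrt_nonneg _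

lemma row_le_twoInf {p n : ℕ} (M : Matrix (Fin p) (Fin n) ℝ) (i : Fin p) :
    Real.sqrt (∑ j, (M i j) ^ 2) ≤ twoInfNorm M := by
  unfold twoInfNorm
  exact le_ciSup (f := fun i => Real.sqrt (∑ j, (M i j) ^ 2))
    (Set.Finite.bddAbove (Set.finite_range _)) i

lemma twoInf_smul_le {p n : ℕ} (c : ℝ) (hc : 0 ≤ c) (M : Matrix (Fin p) (Fin n) ℝ) :
    twoInfNorm (c • M) ≤ c * twoInfNorm M := by
  apply Real.iSup_le _ (mul_nonneg hc (twoInf_nonneg M))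
  intro i
  have : ∑ j, ((c • M) i j) ^ 2 = c ^ 2 * ∑ j, (M i j) ^ 2 := by
    rw [Finset.mul_sum]
    refine Finset.sum_congr rfl fun j _ => ?_
    simp [Matrix.smul_apply, smul_eq_mul]; ring
  rw [this, Real.sqrt_mul (sq_nonneg c), Real.sqrt_sq hc]
  exact mul_le_mul_of_nonneg_left (row_le_twoInf M i) hc

lemma twoInf_zero {p n : ℕ} : twoInfNorm (0 : Matrix (Fin p) (Fin n) ℝ) = 0 := by
  have h1 : twoInfNorm (0 : Matrix (Fin p) (Fin n) ℝ) ≤ 0 := by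
    apply Real.iSup_le _ le_rfl
    intro i
    simp [Matrix.zero_apply]
  exact le_antisymm h1 (twoInf_nonneg _)

theorem stmt_1 (p n d : ℕ) (Z : Matrix (Fin p) (Fin n) ℝ)
    (lam1 lam2 : ℝ) (hlam1 : 0 < lam1) (hlam2 : 0 ≤ lam2)
    (h : Matrix (Fin p) (Fin n) ℝ → ℝ)
    (Lstar : Matrix (Fin p) (Fin d) ℝ) (Rstar : Matrix (Fin n) (Fin d) ℝ)
    (Estar : Matrix (Fin p) (Fin n) ℝ)
    (hfeas : twoInfNorm Rstar ≤ 1)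
    (hmin : ∀ (L : Matrix (Fin p) (Fin d) ℝ) (R : Matrix (Fin n) (Fin d) ℝ)
        (E : Matrix (Fin p) (Fin n) ℝ), twoInfNorm R ≤ 1 →
        (1 / 2) * frobNorm (Z - Lstar * Rstarᵀ - Estar) ^ 2
          + (lam1 / 2) * twoInfNorm Lstar ^ 2 + lam2 * h Estar ≤
        (1 / 2) * frobNorm (Z - L * Rᵀ - E) ^ 2
          + (lam1 / 2) * twoInfNorm L ^ 2 + lam2 * h E)
    (hL : 0 < twoInfNorm Lstar) :
    twoInfNorm Rstar = 1 := by
  set t := twoInfNorm Rstar with ht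
  rcases eq_or_lt_of_le hfeas with h1 | h1
  · exact h1
  exfalso
  have ht0 : 0 ≤ t := twoInf_nonneg _
  rcases eq_or_lt_of_le ht0 with h0 | h0
  · -- t = 0, so Rstar = 0
    have hR0 : Rstar = 0 := by
      ext i j
      have hle : Real.sqrt (∑ j, (Rstar i j) ^ 2) ≤ 0 := by
        rw [h0]; exact row_le_twoInf Rstar i
      have hsum : (∑ j, (Rstar i j) ^ 2) = 0 := by
        have h2 : (∑ j, (Rstar i j) ^ 2) ≤ 0 :=
          Real.sqrt_eq_zero'.mp (le_antisymm hle (Real.sqrt_nonneg _))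
        exact le_antisymm h2 (Finset.sum_nonneg fun _ _ => sq_nonneg _)
      have := (Finset.sum_eq_zero_iff_of_nonneg (fun j _ => sq_nonneg (Rstar i j))).mp hsum j (Finset.mem_univ j)
      simpa using pow_eq_zero_iff (n := 2) (by norm_num) |>.mp this
    have key := hmin 0 0 Estar (by rw [twoInf_zero]; exact zero_le_one)
    have heq : Z - Lstar * Rstarᵀ - Estar = Z - (0 : Matrix (Fin p) (Fin d) ℝ) * (0 : Matrix (Fin n) (Fin d) ℝ)ᵀ - Estar := by
      rw [hR0]
      congr 1
      congr 1
      rw [Matrix.transpose_zero, Matrix.mul_zero, Matrix.zero_mul]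
    rw [heq, twoInf_zero] at key
    nlinarith [mul_pos (half_pos hlam1) (pow_pos hL 2)]
  · -- 0 < t < 1: rescale
    have htne : t ≠ 0 := ne_of_gt h0
    have hinv : (0:ℝ) ≤ t⁻¹ := le_of_lt (inv_pos.mpr h0)
    have hfeas' : twoInfNorm (t⁻¹ • Rstar) ≤ 1 := by
      calc twoInfNorm (t⁻¹ • Rstar) ≤ t⁻¹ * t := twoInf_smul_le _ hinv _
        _ = 1 := inv_mul_cancel₀ htne
    have key := hmin (t • Lstar) (t⁻¹ • Rstar) Estar hfeas'
    have hprod : (t • Lstar) * (t⁻¹ • Rstar)ᵀ = Lstar * Rstarᵀ := by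
      rw [Matrix.transpose_smul, Matrix.smul_mul, Matrix.mul_smul, smul_smul,
        mul_inv_cancel₀ htne, one_smul]
    rw [hprod] at key
    have hsmul : twoInfNorm (t • Lstar) ≤ t * twoInfNorm Lstar := twoInf_smul_le _ ht0 _
    have hsq : twoInfNorm (t • Lstar) ^ 2 ≤ (t * twoInfNorm Lstar) ^ 2 :=
      pow_le_pow_left₀ (twoInf_nonneg _) hsmul 2
    have hlt : (t * twoInfNorm Lstar) ^ 2 < twoInfNorm Lstar ^ 2 := by
      nlinarith [mul_pos (mul_pos (sub_pos.mpr h1) (by linarith : (0:ℝ) < 1 + t)) (pow_pos hL 2)]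
    have hkey2 : lam1 / 2 * twoInfNorm Lstar ^ 2 ≤ lam1 / 2 * twoInfNorm (t • Lstar) ^ 2 := by
      linarith
    have h3 : lam1 / 2 * twoInfNorm (t • Lstar) ^ 2 ≤ lam1 / 2 * (t * twoInfNorm Lstar) ^ 2 :=
      mul_le_mul_of_nonneg_left hsq (by linarith)
    have h4 : lam1 / 2 * (t * twoInfNorm Lstar) ^ 2 < lam1 / 2 * twoInfNorm Lstar ^ 2 :=
      mul_lt_mul_of_pos_left hlt (half_pos hlam1)
    linarith
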